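/- arXiv:1803.03981 — 5 statements merged into one kernel-verified Lean document; each statement's English description precedes it below -/
import Mathlib

section
/- Let a be a real number with a ≠ 1/2 and let n be a natural number. Then the matrix C_a(n) is invertible, and its inverse is C_{a/(2a−1)}(n); that is, C_a(n) · C_{a/(2a−1)}(n) = I and C_{a/(2a−1)}(n) · C_a(n) = I, where I is the 2^n × 2^n identity matrix. -/
/-!
`C_{a,b}(n)` is the `n`-fold Kronecker power of the `2 × 2` matrix `[[a, b], [b, a]]`, so
`C_{a,b}(n) C_{c,d}(n) = C_{ac+bd, ad+bc}(n)`. On the line `b = 1 - a` this reads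
`C_a(n) C_c(n) = C_{ac+(1-a)(1-c)}(n)`, with `C_1(n) = I`,
and `c = a/(2a-1)` solves `ac + (1-a)(1-c) = 1`.
-/

/-- `Cmat a b n` is the `2^n × 2^n` real matrix indexed by bit strings `x, y ∈ {0,1}^n`
whose `(x, y)` entry is `a ^ (n - d) * b ^ d`, where `d` is the Hamming distance
between `x` and `y`. -/
def Cmat (a b : ℝ) (n : ℕ) : Matrix (Fin n → Fin 2) (Fin n → Fin 2) ℝ :=
  Matrix.of fun x y => a ^ (n - hammingDist x y) * b ^ hammingDist x y

/-- `CmatB a n` abbreviates `Cmat a (1 - a) n`. -/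
def CmatB (a : ℝ) (n : ℕ) : Matrix (Fin n → Fin 2) (Fin n → Fin 2) ℝ :=
  Cmat a (1 - a) n

open Finset

lemma Cmat_apply_eq_prod (a b : ℝ) (n : ℕ) (x y : Fin n → Fin 2) :
    Cmat a b n x y = ∏ i, if x i = y i then a else b := by
  have hdist : hammingDist x y = #{i | x i ≠ y i} := rfl
  have hagree : #{i | x i = y i} = n - hammingDist x y := by
    have hsplit := card_filter_add_card_filter_not (s := univ) (fun i => x i = y i)
    rw [card_univ, Fintype.card_fin, ← hdist] at hsplit
    omega
  rw [prod_ite, prod_const, prod_const, hagree, ← hdist]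
  rfl

lemma sum_fin_two_ite_mul_ite (a b c d : ℝ) (u v : Fin 2) :
    ∑ w : Fin 2, (if u = w then a else b) * (if w = v then c else d)
      = if u = v then a * c + b * d else a * d + b * c := by
  fin_cases u <;> fin_cases v <;> simp [Fin.sum_univ_two] <;> ring

lemma Cmat_mul_Cmat (a b c d : ℝ) (n : ℕ) :
    Cmat a b n * Cmat c d n = Cmat (a * c + b * d) (a * d + b * c) n := by
  ext x y
  simp only [Matrix.mul_apply, Cmat_apply_eq_prod, ← prod_mul_distrib,
    ← Fintype.prod_sum fun i w => (if x i = w then a else b) * (if w = y i then c else d),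
    sum_fin_two_ite_mul_ite]

lemma Cmat_one_zero (n : ℕ) : Cmat 1 0 n = 1 := by
  ext x y
  rw [Cmat_apply_eq_prod, Matrix.one_apply]
  by_cases hxy : x = y
  · simp [hxy]
  · obtain ⟨i, hi⟩ := Function.ne_iff.mp hxy
    rw [if_neg hxy, prod_eq_zero (mem_univ i) (if_neg hi)]

lemma CmatB_mul_CmatB (a c : ℝ) (n : ℕ) :
    CmatB a n * CmatB c n = CmatB (a * c + (1 - a) * (1 - c)) n := by
  rw [CmatB, CmatB, Cmat_mul_Cmat, CmatB]
  congr 1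
  ring

lemma CmatB_one (n : ℕ) : CmatB 1 n = 1 := by
  rw [CmatB, sub_self, Cmat_one_zero]

theorem CmatB_inverse (a : ℝ) (ha : a ≠ 1 / 2) (n : ℕ) :
    IsUnit (CmatB a n) ∧
      CmatB a n * CmatB (a / (2 * a - 1)) n = 1 ∧
      CmatB (a / (2 * a - 1)) n * CmatB a n = 1 := by
  have hden : 2 * a - 1 ≠ 0 := fun h => ha (by linarith)
  have hinv : a * (a / (2 * a - 1)) + (1 - a) * (1 - a / (2 * a - 1)) = 1 := by
    rw [one_sub_div hden, ← mul_div_assoc, ← mul_div_assoc, ← add_div, div_eq_one_iff_eq hden]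
    ring
  have hright : CmatB a n * CmatB (a / (2 * a - 1)) n = 1 := by
    rw [CmatB_mul_CmatB, hinv, CmatB_one]
  exact ⟨.of_mul_eq_one _ hright, hright, mul_eq_one_comm.mp hright⟩
end

section
/- Let a be a real number with a ≠ 1/2 and let n be a natural number. Then for all bit strings x, r ∈ {0,1}^n, the (x,r) entry of the inverse of C_a(n) equals a^(n−d) · (a − 1)^d / (2a − 1)^n, where d = |x ⊕ r| is the Hamming distance between x and r. -/
lemma Cmat_eq_prod (a b : ℝ) (n : ℕ) (x y : Fin n → Fin 2) :
    Cmat a b n x y = ∏ i, (if x i = y i then a else b) := by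
  rw [Finset.prod_ite, Finset.prod_const, Finset.prod_const]
  have hd : hammingDist x y = (Finset.univ.filter fun i => ¬ x i = y i).card := by
    simp [hammingDist, Finset.filter_congr]
  have hc : (Finset.univ.filter fun i => x i = y i).card
      = n - hammingDist x y := by
    have := Finset.card_filter_add_card_filter_not
      (s := (Finset.univ : Finset (Fin n))) (p := fun i => x i = y i)
    simp only [Finset.card_univ, Fintype.card_fin] at this
    omega
  rw [hc, ← hd]
  rfl

lemma key (a : ℝ) (n : ℕ) :
    Cmat a (1 - a) n * Cmat a (a - 1) n = (2 * a - 1) ^ n • (1 : Matrix (Fin n → Fin 2) (Fin n → Fin 2) ℝ) := by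
  ext x y
  rw [Matrix.mul_apply]
  simp only [Cmat_eq_prod, ← Finset.prod_mul_distrib]
  have h1 : ∑ z : Fin n → Fin 2, ∏ i, ((if x i = z i then a else 1 - a) * (if z i = y i then a else a - 1))
      = ∏ i, ∑ u : Fin 2, ((if x i = u then a else 1 - a) * (if u = y i then a else a - 1)) := by
    rw [Finset.prod_univ_sum]
    rw [← Fintype.piFinset_univ]
  rw [h1]
  have h2 : ∀ i, (∑ u : Fin 2, ((if x i = u then a else 1 - a) * (if u = y i then a else a - 1)))
      = if x i = y i then 2 * a - 1 else 0 := by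
    intro i
    rw [Fin.sum_univ_two]
    rcases Fin.exists_fin_two.mp ⟨x i, rfl⟩ with hx | hx <;>
      rcases Fin.exists_fin_two.mp ⟨y i, rfl⟩ with hy | hy <;>
      simp [hx, hy] <;> ring
  simp only [h2]
  by_cases hxy : x = y
  · subst hxy
    simp [Matrix.one_apply]
  · have : ∃ i, x i ≠ y i := by
      by_contra h
      push_neg at h
      exact hxy (funext h)
    obtain ⟨i, hi⟩ := this
    rw [Finset.prod_eq_zero (Finset.mem_univ i) (by simp [hi])]
    simp [Matrix.one_apply, hxy]

theorem CmatB_inv_apply (a : ℝ) (ha : a ≠ 1 / 2) (n : ℕ) (x r : Fin n → Fin 2) :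
    (CmatB a n)⁻¹ x r
      = a ^ (n - hammingDist x r) * (a - 1) ^ hammingDist x r / (2 * a - 1) ^ n := by
  have hc : (2 * a - 1) ≠ 0 := by intro h; apply ha; linarith
  have hcn : ((2 * a - 1) ^ n : ℝ) ≠ 0 := pow_ne_zero _ hc
  have hinv : (CmatB a n)⁻¹ = ((2 * a - 1) ^ n)⁻¹ • Cmat a (a - 1) n := by
    apply Matrix.inv_eq_right_inv
    rw [CmatB, Matrix.mul_smul, key, smul_smul, inv_mul_cancel₀ hcn, one_smul]
  rw [hinv]
  simp [Matrix.smul_apply, Cmat, div_eq_inv_mul]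
end

section
/- Let a be a real number with 0 < a < 1, let n and k be natural numbers, and let l_a = max( a/(1−a), (1−a)/a ). Then for all bit strings r, x, x' ∈ {0,1}^n with Hamming distance |x ⊕ x'| ≤ k, the entries of C_a(n) satisfy C_a(n)_{r,x} ≤ (l_a)^k · C_a(n)_{r,x'}. (That is, the iterated bisymmetric randomizer is (k·log l_a)-differentially private for inputs differing in at most k bits.) -/
lemma dp_aux (a b L : ℝ) (ha : 0 < a) (hb : 0 < b) (hab : a / b ≤ L) (hL1 : 1 ≤ L)
    (m k : ℕ) (hmk : m ≤ k) : a ^ m ≤ L ^ k * b ^ m := by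
  have h1 : a ≤ L * b := by rw [div_le_iff₀ hb] at hab; linarith
  calc a ^ m ≤ (L * b) ^ m := pow_le_pow_left₀ ha.le h1 m
    _ = L ^ m * b ^ m := mul_pow _ _ _
    _ ≤ L ^ k * b ^ m := by
        have := pow_le_pow_right₀ hL1 hmk
        have hbm : (0:ℝ) ≤ b ^ m := by positivity
        nlinarith

theorem CmatB_dp (a : ℝ) (ha0 : 0 < a) (ha1 : a < 1) (n k : ℕ)
    (r x x' : Fin n → Fin 2) (hxx' : hammingDist x x' ≤ k) :
    CmatB a n r x ≤ max (a / (1 - a)) ((1 - a) / a) ^ k * CmatB a n r x' := by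
  have hb0 : (0:ℝ) < 1 - a := by linarith
  set b : ℝ := 1 - a with hbdef
  set L : ℝ := max (a / b) (b / a) with hLdef
  have hL1 : 1 ≤ L := by
    rcases le_total a b with h | h
    · exact le_trans (by rw [le_div_iff₀ ha0]; linarith) (le_max_right _ _)
    · exact le_trans (by rw [le_div_iff₀ hb0]; linarith) (le_max_left _ _)
  have hab : a / b ≤ L := le_max_left _ _
  have hba : b / a ≤ L := le_max_right _ _
  set d := hammingDist r x with hd
  set d' := hammingDist r x' with hd'
  have hdn : d ≤ n := le_trans (hammingDist_le_card_fintype) (by simp)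
  have hdn' : d' ≤ n := le_trans (hammingDist_le_card_fintype) (by simp)
  have htri1 : d ≤ d' + k :=
    le_trans (hammingDist_triangle r x' x)
      (by rw [hammingDist_comm x' x]; omega)
  have htri2 : d' ≤ d + k :=
    le_trans (hammingDist_triangle r x x') (by omega)
  show a ^ (n - d) * b ^ d ≤ L ^ k * (a ^ (n - d') * b ^ d')
  rcases le_total d d' with hdd | hdd
  · set m := d' - d with hm
    have hmk : m ≤ k := by omega
    have hnd : n - d = (n - d') + m := by omega
    have hm' : d' = d + m := by omega
    calc a ^ (n - d) * b ^ d
        = (a ^ (n - d') * b ^ d) * a ^ m := by rw [hnd, pow_add]; ring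
      _ ≤ (a ^ (n - d') * b ^ d) * (L ^ k * b ^ m) := by
          apply mul_le_mul_of_nonneg_left (dp_aux a b L ha0 hb0 hab hL1 m k hmk)
          positivity
      _ = L ^ k * (a ^ (n - d') * b ^ d') := by rw [hm', pow_add]; ring
  · set m := d - d' with hm
    have hmk : m ≤ k := by omega
    have hnd : n - d' = (n - d) + m := by omega
    have hm' : d = d' + m := by omega
    calc a ^ (n - d) * b ^ d
        = (a ^ (n - d) * b ^ d') * b ^ m := by rw [hm', pow_add]; ring
      _ ≤ (a ^ (n - d) * b ^ d') * (L ^ k * a ^ m) := by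
          apply mul_le_mul_of_nonneg_left (dp_aux b a L hb0 ha0 hba hL1 m k hmk)
          positivity
      _ = L ^ k * (a ^ (n - d') * b ^ d') := by rw [hnd, pow_add]; ring
end

section
/- Let a be a real number with 0 < a < 1 and a ≠ 1/2, let n be a natural number, let k be a positive natural number, and let α > 0 be a real number such that k · log( max( a/(1−a), (1−a)/a ) ) ≤ α (i.e., the iterated bisymmetric randomizer with parameter a is α-differentially private for inputs differing in at most k bits). Then c = ((a² + (1−a)²)/(2a−1)²)^n satisfies c ≥ c_α(α) := ( (exp(2α/k) + 1) / (exp(α/k) − 1)² )^n, and consequently for every real s with 0 ≤ s < 1 the loss L = (c − s)/(1 − s) satisfies L ≥ (c_α(α) − s)/(1 − s). -/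
theorem efficiency_privacy_tradeoff (a : ℝ) (ha0 : 0 < a) (ha1 : a < 1) (ha : a ≠ 1 / 2)
    (n : ℕ) (k : ℕ) (hk : 0 < k) (α : ℝ) (hα : 0 < α)
    (hdp : (k : ℝ) * Real.log (max (a / (1 - a)) ((1 - a) / a)) ≤ α) :
    ((Real.exp (2 * α / k) + 1) / (Real.exp (α / k) - 1) ^ 2) ^ n
        ≤ ((a ^ 2 + (1 - a) ^ 2) / (2 * a - 1) ^ 2) ^ n ∧
      ∀ s : ℝ, 0 ≤ s → s < 1 →
        (((Real.exp (2 * α / k) + 1) / (Real.exp (α / k) - 1) ^ 2) ^ n - s) / (1 - s)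
          ≤ (((a ^ 2 + (1 - a) ^ 2) / (2 * a - 1) ^ 2) ^ n - s) / (1 - s) := by
  have h1a : 0 < 1 - a := by linarith
  set t : ℝ := max (a / (1 - a)) ((1 - a) / a) with ht
  have ht1 : 1 < t := by
    rcases lt_or_gt_of_ne ha with h | h
    · have : 1 < (1 - a) / a := by
        rw [lt_div_iff₀ ha0]; linarith
      exact lt_of_lt_of_le this (le_max_right _ _)
    · have : 1 < a / (1 - a) := by
        rw [lt_div_iff₀ h1a]; linarith
      exact lt_of_lt_of_le this (le_max_left _ _)
  set u : ℝ := Real.exp (α / k) with hu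
  have hu1 : 1 < u := by
    rw [hu, show (1:ℝ) = Real.exp 0 by simp, Real.exp_lt_exp]
    positivity
  have htu : t ≤ u := by
    have hklog : Real.log t ≤ α / k := by
      rw [le_div_iff₀ (by exact_mod_cast hk)]
      linarith [hdp]
    calc t = Real.exp (Real.log t) := (Real.exp_log (by linarith)).symm
      _ ≤ u := Real.exp_le_exp.mpr hklog
  -- c = f(t)
  have hc : (a ^ 2 + (1 - a) ^ 2) / (2 * a - 1) ^ 2 = (t ^ 2 + 1) / (t - 1) ^ 2 := by
    have h2a : 2 * a - 1 ≠ 0 := by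
      intro h; apply ha; linarith
    have ht0 : (t - 1) ≠ 0 := by linarith
    rw [div_eq_div_iff (pow_ne_zero 2 h2a) (pow_ne_zero 2 ht0)]
    rcases lt_or_gt_of_ne ha with h | h
    · have htval : t = (1 - a) / a := by
        rw [ht, max_eq_right]
        exact div_le_div₀ (by linarith) (by linarith) ha0 (by linarith)
      rw [htval]
      have ha0' : a ≠ 0 := ne_of_gt ha0
      field_simp
      ring
    · have htval : t = a / (1 - a) := by
        rw [ht, max_eq_left]
        exact div_le_div₀ (by linarith) (by linarith) h1a (by linarith)
      rw [htval]
      have h1a' : (1 - a) ≠ 0 := ne_of_gt h1a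
      field_simp
      ring_nf
  have hkey : (u ^ 2 + 1) / (u - 1) ^ 2 ≤ (t ^ 2 + 1) / (t - 1) ^ 2 := by
    rw [div_le_div_iff₀ (pow_pos (by linarith) 2) (pow_pos (by linarith) 2)]
    nlinarith [mul_nonneg (sub_nonneg.mpr htu) (sub_nonneg.mpr (one_le_mul_of_one_le_of_one_le ht1.le hu1.le))]
  have hexp2 : Real.exp (2 * α / k) = u ^ 2 := by
    rw [hu, ← Real.exp_nat_mul]
    norm_num
    ring_nf
  have hbase : (Real.exp (2 * α / k) + 1) / (Real.exp (α / k) - 1) ^ 2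
      ≤ (a ^ 2 + (1 - a) ^ 2) / (2 * a - 1) ^ 2 := by
    rw [hexp2, hc]; exact hkey
  have hnn : 0 ≤ (Real.exp (2 * α / k) + 1) / (Real.exp (α / k) - 1) ^ 2 := by
    rw [hexp2]; positivity
  have hpow : ((Real.exp (2 * α / k) + 1) / (Real.exp (α / k) - 1) ^ 2) ^ n
      ≤ ((a ^ 2 + (1 - a) ^ 2) / (2 * a - 1) ^ 2) ^ n :=
    pow_le_pow_left₀ hnn hbase n
  refine ⟨hpow, fun s hs0 hs1 => ?_⟩
  have h1s : 0 < 1 - s := by linarith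
  gcongr
end

section
/- Let p be a real number with 0 < p < 2/3 and p ≠ 1/2. Then (p² − 2p + 2) / (2(p − 1)²) < (2p² − 2p + 1) / (2p − 1)². (That is, for p < 2/3 the unrelated uniform question randomizer has smaller efficiency constant c than Warner's randomizer with the same parameter p.) -/
theorem unrelated_beats_warner (p : ℝ) (hp0 : 0 < p) (hp1 : p < 2 / 3) (hp : p ≠ 1 / 2) :
    (p ^ 2 - 2 * p + 2) / (2 * (p - 1) ^ 2)
      < (2 * p ^ 2 - 2 * p + 1) / (2 * p - 1) ^ 2 := by
  have h1 : p - 1 ≠ 0 := by nlinarith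
  have h2 : 2 * p - 1 ≠ 0 := by
    intro h; apply hp; linarith
  have d1 : 0 < 2 * (p - 1) ^ 2 := by positivity
  have d2 : 0 < (2 * p - 1) ^ 2 := by positivity
  rw [div_lt_div_iff₀ d1 d2]
  nlinarith [sq_nonneg (2*p-1), sq_nonneg (p-1), sq_nonneg p, mul_pos d1 d2, sq_nonneg (2*p-1) , sq_nonneg ((2*p-1)*(p-1))]
end
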